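/- In the setting where z_R is a unit eigenvector of V*(A - θI)*(A - θI)V with eigenvalue σ² > 0 achieving the minimal Rayleigh quotient, m = y + (I - yy*)z with V*(A - θI)*(A - θI)Vm = Ky, K = ‖(A - θI)Vm‖², τ > 1 the line-search scalar, and s = y + τ(I - yy*)z, one has z_R*s = z_R*y · (1 + τ(K - σ²)/σ²); in particular if z_R*y ≠ 0 then the ratios (z_R*s)/(z_R*y) and (z_R*(I - yy*)z)/(z_R*y) are real and nonnegative. -/

import Mathlib

open Matrix
open scoped ComplexConjugate

/-- Squared Euclidean norm of a complex vector. -/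
noncomputable def nsq {k : ℕ} (x : Fin k → ℂ) : ℝ := ∑ i, ‖x i‖ ^ 2

/-- Standard Hermitian inner product (conjugate-linear in the first argument). -/
noncomputable def cip {k : ℕ} (x y : Fin k → ℂ) : ℂ := ∑ i, conj (x i) * y i

/-- Orthogonal projection `(I - yy*) v`. -/
noncomputable def proj {k : ℕ} (y v : Fin k → ℂ) : Fin k → ℂ := v - cip y v • y

/-!
Since `M` is Hermitian, `zR` is also a left eigenvector: `zR* M = σ² zR*`. Pairing
`M m = K y` with `zR` therefore gives `σ² zR* m = K zR* y`, i.e.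
`zR* (I - yy*) z = (K - σ²)/σ² · zR* y`, and the formula for `zR* s` follows by linearity.
The ratios are nonnegative because `K ≥ σ²`: `m` has norm at least `1` (it is `y` plus a
vector orthogonal to `y`), so minimality of `σ²` gives `K ≥ σ² ‖m‖² ≥ σ²`.
-/

section InnerProduct

variable {k : ℕ}

lemma cip_eq_star_dotProduct (x y : Fin k → ℂ) : cip x y = star x ⬝ᵥ y := by
  simp [cip, dotProduct]

lemma nsq_nonneg (x : Fin k → ℂ) : 0 ≤ nsq x :=
  Finset.sum_nonneg fun _ _ => sq_nonneg _

lemma cip_self (x : Fin k → ℂ) : cip x x = nsq x := by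
  simp [cip, nsq, Complex.conj_mul']

lemma nsq_smul (c : ℂ) (x : Fin k → ℂ) : nsq (c • x) = ‖c‖ ^ 2 * nsq x := by
  simp [nsq, mul_pow, Finset.mul_sum]

lemma cip_add_right (x a b : Fin k → ℂ) : cip x (a + b) = cip x a + cip x b := by
  simp [cip, mul_add, Finset.sum_add_distrib]

lemma cip_add_left (a b x : Fin k → ℂ) : cip (a + b) x = cip a x + cip b x := by
  simp [cip, add_mul, Finset.sum_add_distrib]

lemma cip_smul_right (c : ℂ) (x a : Fin k → ℂ) : cip x (c • a) = c * cip x a := by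
  simp [cip_eq_star_dotProduct]

lemma cip_sub_right (x a b : Fin k → ℂ) : cip x (a - b) = cip x a - cip x b := by
  simp [cip_eq_star_dotProduct]

lemma cip_comm (a b : Fin k → ℂ) : cip b a = conj (cip a b) := by
  simp [cip, map_sum, mul_comm]

lemma cip_proj_right_of_nsq_eq_one {y : Fin k → ℂ} (hy : nsq y = 1) (v : Fin k → ℂ) :
    cip y (proj y v) = 0 := by
  simp [proj, cip_sub_right, cip_smul_right, cip_self, hy]

lemma nsq_add_of_cip_eq_zero {y w : Fin k → ℂ} (h : cip y w = 0) :
    nsq (y + w) = nsq y + nsq w := by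
  have hC : (nsq (y + w) : ℂ) = (nsq y + nsq w : ℝ) := by
    rw [← cip_self, cip_add_right, cip_add_left, cip_add_left, cip_self, cip_self,
      cip_comm y w, h]
    simp
  exact_mod_cast hC

lemma mul_nsq_le_of_forall_nsq_eq_one {m : ℕ} (B : Matrix (Fin m) (Fin k) ℂ) {c : ℝ}
    (hmin : ∀ x : Fin k → ℂ, nsq x = 1 → c ≤ nsq (B *ᵥ x)) (x : Fin k → ℂ) :
    c * nsq x ≤ nsq (B *ᵥ x) := by
  rcases (nsq_nonneg x).eq_or_lt with hx | hx
  · rw [← hx, mul_zero]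
    exact nsq_nonneg _
  set r : ℝ := (Real.sqrt (nsq x))⁻¹
  have hr : r ^ 2 = (nsq x)⁻¹ := by
    rw [inv_pow, Real.sq_sqrt hx.le]
  have hnorm : ‖(r : ℂ)‖ ^ 2 = (nsq x)⁻¹ := by
    rw [Complex.norm_real, Real.norm_eq_abs, sq_abs, hr]
  have hunit := hmin ((r : ℂ) • x) (by rw [nsq_smul, hnorm, inv_mul_cancel₀ hx.ne'])
  rw [mulVec_smul, nsq_smul, hnorm, inv_mul_eq_div, le_div_iff₀ hx] at hunit
  linarith

lemma cip_mulVec_of_isHermitian {M : Matrix (Fin k) (Fin k) ℂ} (hM : M.IsHermitian)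
    {x : Fin k → ℂ} {μ : ℝ} (hx : M *ᵥ x = (μ : ℂ) • x) (v : Fin k → ℂ) :
    cip x (M *ᵥ v) = μ * cip x v := by
  have hleft : star x ᵥ* M = star (M *ᵥ x) := by
    rw [star_mulVec, hM.eq]
  rw [cip_eq_star_dotProduct, dotProduct_mulVec, hleft, hx, cip_eq_star_dotProduct]
  simp [star_smul, smul_dotProduct]

end InnerProduct

lemma div_eq_ofReal_of_eq_mul {a b : ℂ} {r : ℝ} (h : a = b * r) (hb : b ≠ 0) :
    a / b = r := by
  rw [h, mul_div_cancel_left₀ _ hb]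

theorem stmt11_general {n k : ℕ} (A : Matrix (Fin n) (Fin n) ℂ) (V : Matrix (Fin n) (Fin k) ℂ)
    (θ : ℂ) (y z zR : Fin k → ℂ)
    (hy : nsq y = 1)
    (M : Matrix (Fin k) (Fin k) ℂ)
    (hM : M = Vᴴ * (A - θ • 1)ᴴ * ((A - θ • 1) * V))
    (σ2 : ℝ) (hσpos : 0 < σ2)
    (heig : M.mulVec zR = ((σ2 : ℝ) : ℂ) • zR)
    (hσmin : ∀ x : Fin k → ℂ, nsq x = 1 → σ2 ≤ nsq ((A - θ • 1).mulVec (V.mulVec x)))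
    (w : Fin k → ℂ) (hw : w = proj y z)
    (K : ℝ) (hK : K = nsq ((A - θ • 1).mulVec (V.mulVec (y + w))))
    (hm : M.mulVec (y + w) = ((K : ℝ) : ℂ) • y)
    (τ : ℝ) (hτ : 1 < τ)
    (s : Fin k → ℂ) (hs : s = y + (τ : ℂ) • w) :
    cip zR s = cip zR y * ((1 + τ * (K - σ2) / σ2 : ℝ) : ℂ) ∧
      (cip zR y ≠ 0 →
        (cip zR s / cip zR y).im = 0 ∧ 0 ≤ (cip zR s / cip zR y).re ∧
        (cip zR w / cip zR y).im = 0 ∧ 0 ≤ (cip zR w / cip zR y).re) := by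
  have hMH : M.IsHermitian := by
    rw [hM, ← conjTranspose_mul]
    exact isHermitian_conjTranspose_mul_self _
  have hpair := cip_mulVec_of_isHermitian hMH heig (y + w)
  rw [hm, cip_smul_right, cip_add_right] at hpair
  have hσ0 : (σ2 : ℂ) ≠ 0 := by exact_mod_cast hσpos.ne'
  have hw_ratio : cip zR w = cip zR y * (((K - σ2) / σ2 : ℝ) : ℂ) := by
    push_cast
    field_simp
    linear_combination -hpair
  have hKσ : σ2 ≤ K := by
    have hmin := mul_nsq_le_of_forall_nsq_eq_one ((A - θ • 1) * V)
      (by simpa only [← mulVec_mulVec] using hσmin) (y + w)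
    rw [← mulVec_mulVec, ← hK,
      nsq_add_of_cip_eq_zero (hw ▸ cip_proj_right_of_nsq_eq_one hy z), hy] at hmin
    nlinarith [nsq_nonneg w]
  have hratio_nonneg : 0 ≤ (K - σ2) / σ2 := div_nonneg (by linarith) hσpos.le
  have hs_ratio : cip zR s = cip zR y * ((1 + τ * (K - σ2) / σ2 : ℝ) : ℂ) := by
    rw [hs, cip_add_right, cip_smul_right, hw_ratio]
    push_cast
    ring
  refine ⟨hs_ratio, fun hy0 => ?_⟩
  rw [div_eq_ofReal_of_eq_mul hs_ratio hy0, div_eq_ofReal_of_eq_mul hw_ratio hy0]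
  simp only [Complex.ofReal_im, Complex.ofReal_re, true_and, hratio_nonneg, and_true]
  rw [mul_div_assoc]
  positivity

theorem stmt11 {n k : ℕ} (A : Matrix (Fin n) (Fin n) ℂ) (V : Matrix (Fin n) (Fin k) ℂ)
    (θ : ℂ) (y z zR : Fin k → ℂ)
    (hV : Vᴴ * V = 1) (hy : nsq y = 1)
    (M : Matrix (Fin k) (Fin k) ℂ)
    (hM : M = Vᴴ * (A - θ • 1)ᴴ * ((A - θ • 1) * V))
    (σ2 : ℝ) (hσpos : 0 < σ2) (hzR : nsq zR = 1)
    (heig : M.mulVec zR = ((σ2 : ℝ) : ℂ) • zR)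
    (hσ : σ2 = nsq ((A - θ • 1).mulVec (V.mulVec zR)))
    (hσmin : ∀ x : Fin k → ℂ, nsq x = 1 → σ2 ≤ nsq ((A - θ • 1).mulVec (V.mulVec x)))
    (w : Fin k → ℂ) (hw : w = proj y z)
    (K : ℝ) (hK : K = nsq ((A - θ • 1).mulVec (V.mulVec (y + w))))
    (hm : M.mulVec (y + w) = ((K : ℝ) : ℂ) • y)
    (τ : ℝ) (hτ : 1 < τ)
    (s : Fin k → ℂ) (hs : s = y + (τ : ℂ) • w) :
    cip zR s = cip zR y * ((1 + τ * (K - σ2) / σ2 : ℝ) : ℂ) ∧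
      (cip zR y ≠ 0 →
        (cip zR s / cip zR y).im = 0 ∧ 0 ≤ (cip zR s / cip zR y).re ∧
        (cip zR w / cip zR y).im = 0 ∧ 0 ≤ (cip zR w / cip zR y).re) :=
  stmt11_general A V θ y z zR hy M hM σ2 hσpos heig hσmin w hw K hK hm τ hτ s hs
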